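/- For every d ≥ 1 and each ε ∈ {0,1}, there is a unique ℂ(q,z)-linear map g_ε : Markov(⊔S_dB) → Markov(⊔S_{d−1}B) such that g_ε([β,n]) = [f_{n,ε}(β), n] for every n ≥ 2 and every β ∈ S_dB_n; that is, the families {f_{n,0}}_{n} and {f_{n,1}}_{n} are compatible with the defining relations of the Markov modules. -/

import Mathlib

open scoped TensorProduct DirectSum

set_option synthInstance.maxHeartbeats 1000000
set_option maxHeartbeats 2000000

namespace SingularHOMFLYPT

/-- Generators of the singular braid monoid on `n` strands: `pos i` is `σ_{i+1}`,
`neg i` is `σ_{i+1}⁻¹` and `tau i` is `τ_{i+1}`, for `i : Fin (n-1)`. -/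
inductive SBGen (n : ℕ) : Type
  | pos : Fin (n - 1) → SBGen n
  | neg : Fin (n - 1) → SBGen n
  | tau : Fin (n - 1) → SBGen n

open FreeMonoid in
/-- The defining relations of the singular braid monoid `SB_n` (Baez, Birman). -/
inductive SBRel (n : ℕ) : FreeMonoid (SBGen n) → FreeMonoid (SBGen n) → Prop
  | inv_right (i : Fin (n - 1)) : SBRel n (of (.pos i) * of (.neg i)) 1
  | inv_left (i : Fin (n - 1)) : SBRel n (of (.neg i) * of (.pos i)) 1
  | sigma_tau (i : Fin (n - 1)) :
      SBRel n (of (.pos i) * of (.tau i)) (of (.tau i) * of (.pos i))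
  | braid (i j : Fin (n - 1)) (h : (i : ℕ) + 1 = j ∨ (j : ℕ) + 1 = i) :
      SBRel n (of (.pos i) * of (.pos j) * of (.pos i))
        (of (.pos j) * of (.pos i) * of (.pos j))
  | braid_tau (i j : Fin (n - 1)) (h : (i : ℕ) + 1 = j ∨ (j : ℕ) + 1 = i) :
      SBRel n (of (.pos i) * of (.pos j) * of (.tau i))
        (of (.tau j) * of (.pos i) * of (.pos j))
  | comm_ss (i j : Fin (n - 1)) (h : (i : ℕ) + 2 ≤ j ∨ (j : ℕ) + 2 ≤ i) :
      SBRel n (of (.pos i) * of (.pos j)) (of (.pos j) * of (.pos i))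
  | comm_st (i j : Fin (n - 1)) (h : (i : ℕ) + 2 ≤ j ∨ (j : ℕ) + 2 ≤ i) :
      SBRel n (of (.pos i) * of (.tau j)) (of (.tau j) * of (.pos i))
  | comm_tt (i j : Fin (n - 1)) (h : (i : ℕ) + 2 ≤ j ∨ (j : ℕ) + 2 ≤ i) :
      SBRel n (of (.tau i) * of (.tau j)) (of (.tau j) * of (.tau i))

/-- The congruence on the free monoid generated by the singular braid relations. -/
def SBcon (n : ℕ) : Con (FreeMonoid (SBGen n)) := conGen (SBRel n)

/-- The singular braid monoid on `n` strands, as a presented monoid. -/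
abbrev SB (n : ℕ) : Type := (SBcon n).Quotient

/-- The canonical projection from the free monoid onto `SB n`. -/
def SB.mk {n : ℕ} : FreeMonoid (SBGen n) →* SB n := Con.mk' (SBcon n)

/-- The generator `σ_{i+1}` of `SB n`. -/
def sG {n : ℕ} (i : Fin (n - 1)) : SB n := SB.mk (.of (.pos i))

/-- The generator `σ_{i+1}⁻¹` of `SB n`. -/
def sInvG {n : ℕ} (i : Fin (n - 1)) : SB n := SB.mk (.of (.neg i))

/-- The generator `τ_{i+1}` of `SB n`. -/
def tauG {n : ℕ} (i : Fin (n - 1)) : SB n := SB.mk (.of (.tau i))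

theorem SB.sound {n : ℕ} {a b : FreeMonoid (SBGen n)} (h : SBRel n a b) :
    SB.mk a = SB.mk b :=
  Con.eq _ |>.2 (ConGen.Rel.of a b h)

/-- Lift a map on generators to a monoid homomorphism on `SB n`. -/
def SB.lift {n : ℕ} {M : Type*} [Monoid M] (f : SBGen n → M)
    (h : ∀ a b, SBRel n a b → FreeMonoid.lift f a = FreeMonoid.lift f b) :
    SB n →* M :=
  Con.lift _ (FreeMonoid.lift f)
    (Con.conGen_le.2 fun a b hab => (Con.ker_rel _).2 (h a b hab))

@[simp] theorem SB.lift_mk {n : ℕ} {M : Type*} [Monoid M] (f : SBGen n → M)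
    (h : ∀ a b, SBRel n a b → FreeMonoid.lift f a = FreeMonoid.lift f b)
    (w : FreeMonoid (SBGen n)) :
    SB.lift f h (SB.mk w) = FreeMonoid.lift f w :=
  Con.lift_coe _ w

/-- The number of singular points (`τ`-letters) of a generator. -/
def degGen {n : ℕ} : SBGen n → Multiplicative ℕ
  | .tau _ => Multiplicative.ofAdd 1
  | _ => 1

/-- The monoid homomorphism `deg : SB n →* (ℕ, +)` counting singular points. -/
def degM {n : ℕ} : SB n →* Multiplicative ℕ :=
  SB.lift degGen (by
    rintro a b h
    cases h <;> simp [degGen, mul_comm])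
/-- Shifting generators by `k`, viewing `SB n` inside `SB N` (strands `k+1, …, k+n`). -/
def shiftGen {n : ℕ} (N k : ℕ) (h : k + n ≤ N) : SBGen n → SBGen N
  | .pos i => .pos ⟨k + i, by have := i.2; omega⟩
  | .neg i => .neg ⟨k + i, by have := i.2; omega⟩
  | .tau i => .tau ⟨k + i, by have := i.2; omega⟩

theorem shiftGen_rel {n : ℕ} (N k : ℕ) (h : k + n ≤ N) {a b : FreeMonoid (SBGen n)}
    (hab : SBRel n a b) :
    SBRel N (FreeMonoid.map (shiftGen N k h) a) (FreeMonoid.map (shiftGen N k h) b) := by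
  cases hab <;>
    simp only [map_mul, map_one, FreeMonoid.map_of, shiftGen] <;>
    first
      | exact SBRel.inv_right _
      | exact SBRel.inv_left _
      | exact SBRel.sigma_tau _
      | (rename_i i j hij; exact SBRel.braid _ _ (by simp; omega))
      | (rename_i i j hij; first
          | exact SBRel.braid_tau _ _ (by simp; omega)
          | exact SBRel.comm_ss _ _ (by simp; omega)
          | exact SBRel.comm_st _ _ (by simp; omega)
          | exact SBRel.comm_tt _ _ (by simp; omega))

/-- The monoid homomorphism `SB n →* SB N` placing a braid on the strands `k+1, …, k+n`. -/
def shiftHom {n : ℕ} (N k : ℕ) (h : k + n ≤ N) : SB n →* SB N :=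
  Con.lift _ (SB.mk.comp (FreeMonoid.map (shiftGen N k h)))
    (Con.conGen_le.2 fun a b hab => (Con.ker_rel _).2 (SB.sound (shiftGen_rel N k h hab)))

/-- The natural inclusion `SB n →* SB N` (adding trivial strands on the right). -/
def inclSB {n : ℕ} (N : ℕ) (h : n ≤ N) : SB n →* SB N := shiftHom N 0 (by omega)

/-- `α ∗ β`: the braid obtained by placing `β` (on `m` strands) above (to the right of)
`α` (on `n` strands), realized in `SB N` for `n + m ≤ N`. -/
def starIn {n m : ℕ} (N : ℕ) (h : n + m ≤ N) (α : SB n) (β : SB m) : SB N :=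
  inclSB N (by omega) α * shiftHom N n h β
@[simp] theorem shiftHom_mk {n : ℕ} (N k : ℕ) (h : k + n ≤ N) (w : FreeMonoid (SBGen n)) :
    shiftHom N k h (SB.mk w) = SB.mk (FreeMonoid.map (shiftGen N k h) w) :=
  Con.lift_coe _ w

theorem shiftHom_sG {n : ℕ} (N k : ℕ) (h : k + n ≤ N) (i : Fin (n - 1)) :
    shiftHom N k h (sG i) = sG ⟨k + i.1, by have := i.2; omega⟩ := rfl

theorem inclSB_sG {n : ℕ} (N : ℕ) (h : n ≤ N) (i : Fin (n - 1)) :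
    inclSB N h (sG i) = sG ⟨0 + i.1, by have := i.2; omega⟩ := rfl

noncomputable section

/-- The field `ℂ(q)` of rational functions over `ℂ` in the variable `q`. -/
abbrev Kq : Type := RatFunc ℂ

/-- The field `ℂ(q,z) = ℂ(q)(z)` of rational functions over `ℂ` in the variables `q, z`. -/
abbrev Lqz : Type := RatFunc Kq

/-- The variable `q`, as an element of `ℂ(q)`. -/
def qK : Kq := RatFunc.X

/-- The variable `z`, as an element of `ℂ(q,z)`. -/
def zL : Lqz := RatFunc.X

/-- The variable `q`, as an element of `ℂ(q,z)`. -/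
def qL : Lqz := algebraMap Kq Lqz qK

/-- The Hecke relations `σ_k² = (q-1)σ_k + q` in the monoid algebra `ℂ(q)[SB_n]`. -/
def HeckeRel (n : ℕ) : MonoidAlgebra Kq (SB n) → MonoidAlgebra Kq (SB n) → Prop :=
  fun x y => ∃ i : Fin (n - 1),
    x = MonoidAlgebra.of Kq (SB n) (sG i) ^ 2 ∧
    y = (qK - 1) • MonoidAlgebra.of Kq (SB n) (sG i) + qK • 1

/-- The singular Hecke algebra `H(SB_n)`: the quotient of `ℂ(q)[SB_n]` by the two-sided
ideal generated by the elements `σ_k² - (q-1)σ_k - q`. -/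
abbrev Hecke (n : ℕ) : Type := RingQuot (HeckeRel n)

/-- The image of a singular braid in the singular Hecke algebra. -/
def heckeOf {n : ℕ} (β : SB n) : Hecke n :=
  RingQuot.mkAlgHom Kq (HeckeRel n) (MonoidAlgebra.of Kq (SB n) β)

/-- `H_z(SB_n) := ℂ(q,z) ⊗_{ℂ(q)} H(SB_n)`. -/
abbrev HeckeZ (n : ℕ) : Type := Lqz ⊗[Kq] Hecke n

/-- The image of a singular braid in `H_z(SB_n)`. -/
def ofHZ {n : ℕ} (β : SB n) : HeckeZ n := (1 : Lqz) ⊗ₜ[Kq] heckeOf β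

/-- The algebra homomorphism `H(SB_n) → H(SB_{n+1})` induced by the natural inclusion
`SB_n ↪ SB_{n+1}`. -/
def heckeIncl (n : ℕ) : Hecke n →ₐ[Kq] Hecke (n + 1) :=
  RingQuot.liftAlgHom Kq
    ⟨((RingQuot.mkAlgHom Kq (HeckeRel (n + 1))).comp
        (MonoidAlgebra.mapDomainAlgHom Kq Kq (inclSB (n + 1) (Nat.le_succ n)))),
      by
        rintro x y ⟨i, rfl, rfl⟩
        have hi := i.2
        set i' : Fin ((n + 1) - 1) := ⟨0 + i.1, by omega⟩ with hi'
        have hgen : (MonoidAlgebra.mapDomainAlgHom Kq Kq (inclSB (n + 1) (Nat.le_succ n)))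
            (MonoidAlgebra.of Kq (SB n) (sG i)) = MonoidAlgebra.of Kq (SB (n + 1)) (sG i') := by
          rw [MonoidAlgebra.of_apply, MonoidAlgebra.mapDomainAlgHom_apply,
            MonoidAlgebra.mapDomain_single, inclSB_sG, MonoidAlgebra.of_apply]
        have hrel : HeckeRel (n + 1) (MonoidAlgebra.of Kq (SB (n + 1)) (sG i') ^ 2)
            ((qK - 1) • MonoidAlgebra.of Kq (SB (n + 1)) (sG i') + qK • 1) := ⟨i', rfl, rfl⟩
        have hmk := RingQuot.mkAlgHom_rel Kq hrel
        simp only [map_pow, map_add, map_smul, map_one] at hmk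
        simp only [AlgHom.coe_comp, Function.comp_apply, map_pow, map_add, map_smul, map_one,
          hgen]
        exact hmk⟩

/-- The algebra homomorphism `ι_n : H_z(SB_n) → H_z(SB_{n+1})`. -/
def iotaHZ (n : ℕ) : HeckeZ n →ₐ[Lqz] HeckeZ (n + 1) :=
  Algebra.TensorProduct.map (AlgHom.id Lqz Lqz) (heckeIncl n)
/-- The `ℂ(q)`-subspace `H(S_dB_n)` of the singular Hecke algebra spanned by the images of
the singular braids with `d` singular points. -/
def HSd (n d : ℕ) : Submodule Kq (Hecke n) :=
  Submodule.span Kq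
    {x | ∃ β : SB n, degM β = Multiplicative.ofAdd d ∧ x = heckeOf β}

/-- The `ℂ(q,z)`-subspace `H_z(S_dB_n)` of `H_z(SB_n)` spanned by the images of the singular
braids with `d` singular points. -/
def HzSd (n d : ℕ) : Submodule Lqz (HeckeZ n) :=
  Submodule.span Lqz
    {x | ∃ β : SB n, degM β = Multiplicative.ofAdd d ∧ x = ofHZ β}

/-- Strand counts: the positive natural numbers. -/
abbrev Idx : Type := {n : ℕ // 0 < n}

/-- The direct sum `⊕_{n ≥ 1} H_z(SB_n)`. -/
abbrev MV : Type := ⨁ i : Idx, HeckeZ i.1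

instance instAddCommGroupHeckeZ (n : ℕ) : AddCommGroup (HeckeZ n) := inferInstance
instance instModuleHeckeZ (n : ℕ) : Module Lqz (HeckeZ n) := inferInstance
instance instAddCommGroupMV : AddCommGroup MV := inferInstance
instance instModuleMV : Module Lqz MV := inferInstance

/-- The canonical inclusion of the `n`-th summand of `⊕_{n ≥ 1} H_z(SB_n)`. -/
def mvof (i : Idx) : HeckeZ i.1 →ₗ[Lqz] MV :=
  DirectSum.lof Lqz Idx (fun i => HeckeZ i.1) i

/-- Successor of a strand count. -/
def succI (i : Idx) : Idx := ⟨i.1 + 1, Nat.succ_pos _⟩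

/-- The generator `σ_n` of `SB_{n+1}`. -/
def sigmaLast (i : Idx) : SB (i.1 + 1) := sG ⟨i.1 - 1, Nat.sub_lt i.2 one_pos⟩

/-- The Markov relations in `⊕_{n ≥ 1} H_z(SB_n)`: trace relations, stabilization relations
and positive Markov relations. -/
def markovRels : Set MV :=
  {x | ∃ (i : Idx) (a b : HeckeZ i.1), x = mvof i (a * b) - mvof i (b * a)} ∪
  {x | ∃ (i : Idx) (a : HeckeZ i.1), x = mvof i a - mvof (succI i) (iotaHZ i.1 a)} ∪
  {x | ∃ (i : Idx) (a : HeckeZ i.1),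
    x = mvof (succI i) (iotaHZ i.1 a * ofHZ (sigmaLast i)) - zL • mvof i a}

/-- The Markov module `Markov(⊔SB)`. -/
abbrev Markov : Type := MV ⧸ Submodule.span Lqz markovRels

instance instAddCommGroupMarkov : AddCommGroup Markov := inferInstance
instance instModuleMarkov : Module Lqz Markov := inferInstance

/-- The class `[a, m]` in the Markov module of an element `a ∈ H_z(SB_m)`. -/
def markovClass (m : ℕ) (hm : 0 < m) (a : HeckeZ m) : Markov :=
  Submodule.Quotient.mk (mvof ⟨m, hm⟩ a)

/-- The class `[β, m]` in the Markov module of a singular braid `β ∈ SB_m`. -/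
def braidClass (m : ℕ) (hm : 0 < m) (β : SB m) : Markov :=
  markovClass m hm (ofHZ β)

/-- The direct sum `⊕_{n ≥ 1} H_z(S_dB_n)`. -/
abbrev MVD (d : ℕ) : Type := ⨁ i : Idx, ↥(HzSd i.1 d)

instance instAddCommGroupMVD (d : ℕ) : AddCommGroup (MVD d) := inferInstance
instance instModuleMVD (d : ℕ) : Module Lqz (MVD d) := inferInstance

/-- The canonical inclusion of the `n`-th summand of `⊕_{n ≥ 1} H_z(S_dB_n)`. -/
def mvdof (d : ℕ) (i : Idx) : ↥(HzSd i.1 d) →ₗ[Lqz] MVD d :=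
  DirectSum.lof Lqz Idx (fun i => ↥(HzSd i.1 d)) i

/-- The Markov relations in `⊕_{n ≥ 1} H_z(S_dB_n)`. -/
def markovRelsD (d : ℕ) : Set (MVD d) :=
  {x | ∃ (i : Idx) (k l : ℕ), k + l = d ∧ ∃ (a b : HeckeZ i.1),
    a ∈ HzSd i.1 k ∧ b ∈ HzSd i.1 l ∧
    ∃ (hab : a * b ∈ HzSd i.1 d) (hba : b * a ∈ HzSd i.1 d),
      x = mvdof d i ⟨a * b, hab⟩ - mvdof d i ⟨b * a, hba⟩} ∪
  {x | ∃ (i : Idx) (a : HeckeZ i.1) (ha : a ∈ HzSd i.1 d)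
      (ha' : iotaHZ i.1 a ∈ HzSd (i.1 + 1) d),
    x = mvdof d i ⟨a, ha⟩ - mvdof d (succI i) ⟨iotaHZ i.1 a, ha'⟩} ∪
  {x | ∃ (i : Idx) (a : HeckeZ i.1) (ha : a ∈ HzSd i.1 d)
      (ha' : iotaHZ i.1 a * ofHZ (sigmaLast i) ∈ HzSd (i.1 + 1) d),
    x = mvdof d (succI i) ⟨iotaHZ i.1 a * ofHZ (sigmaLast i), ha'⟩ - zL • mvdof d i ⟨a, ha⟩}

/-- The `d`-th Markov module `Markov(⊔S_dB)`. -/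
abbrev MarkovD (d : ℕ) : Type := MVD d ⧸ Submodule.span Lqz (markovRelsD d)

instance instAddCommGroupMarkovD (d : ℕ) : AddCommGroup (MarkovD d) := inferInstance
instance instModuleMarkovD (d : ℕ) : Module Lqz (MarkovD d) := inferInstance

/-- The class `[β, m]` in the `d`-th Markov module of a singular braid `β ∈ S_dB_m`
(defined to be `0` if `β` does not have exactly `d` singular points). -/
def classD (d m : ℕ) (hm : 0 < m) (β : SB m) : MarkovD d :=
  if h : degM β = Multiplicative.ofAdd d then
    Submodule.Quotient.mk (mvdof d ⟨m, hm⟩ ⟨ofHZ β, Submodule.subset_span ⟨β, h, rfl⟩⟩)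
  else 0
/-- The singular braid `W_{d,k} = τ_1 τ_3 ⋯ τ_{2k-1} (τ_{2k+1}σ_{2k+1}) ⋯ (τ_{2d-1}σ_{2d-1})`
in `SB_{2d}` (for `1 ≤ d` and `k ≤ d`). -/
def W (d k : ℕ) : SB (2 * d) :=
  ((List.range d).map (fun j =>
    if h : 2 * j < 2 * d - 1 then
      (if j < k then tauG ⟨2 * j, h⟩ else tauG ⟨2 * j, h⟩ * sG ⟨2 * j, h⟩)
    else 1)).prod

/-- The class of `W_{d,k}` in the `d`-th Markov module: `[W_{d,k}, 2d]` for `d ≥ 1`, and the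
class `[W_{0,0}, 1]` of the trivial braid on one strand for `d = 0`. -/
def WclassD (d k : ℕ) : MarkovD d :=
  if hd : d = 0 then hd ▸ classD 0 1 one_pos 1
  else classD d (2 * d) (by omega) (W d k)

/-- The singular braid `α_0 τ_{i_1} α_1 τ_{i_2} ⋯ τ_{i_d} α_d`. -/
def sbWord {m d : ℕ} (α : Fin (d + 1) → SB m) (idx : Fin d → Fin (m - 1)) : SB m :=
  α 0 * ((List.ofFn fun j : Fin d => tauG (idx j) * α j.succ).prod)

/-- The singular braid `α_0 τ_{i_1} α_1 ⋯ τ_{i_{k-1}} α_{k-1} x α_k τ_{i_{k+1}} ⋯ τ_{i_d} α_d`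
obtained from `α_0 τ_{i_1} α_1 ⋯ τ_{i_d} α_d` by replacing the letter `τ_{i_k}` by `x`. -/
def sbWordRepl {m d : ℕ} (α : Fin (d + 1) → SB m) (idx : Fin d → Fin (m - 1))
    (k : Fin d) (x : SB m) : SB m :=
  α 0 * ((List.ofFn fun j : Fin d => (if j = k then x else tauG (idx j)) * α j.succ).prod)

/-- `RepGen false i = 1` (deleting a `τ` letter) and `RepGen true i = σ_{i+1}` (replacing a
`τ` letter by the corresponding `σ` letter). -/
def RepGen {m : ℕ} (ε : Bool) (i : Fin (m - 1)) : SB m := if ε then sG i else 1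

/-- `IsG d ε g` says that the linear map `g : Markov(⊔S_dB) → Markov(⊔S_{d-1}B)` is induced
by the family of maps `f_{n,ε}` (deletion of one `τ` letter for `ε = false`, replacement of one
`τ` letter by the corresponding `σ` letter for `ε = true`), i.e. that
`g([β,n]) = [f_{n,ε}(β), n]` for every singular braid `β ∈ S_dB_n`. -/
def IsG (d : ℕ) (ε : Bool) (g : MarkovD d →ₗ[Lqz] MarkovD (d - 1)) : Prop :=
  ∀ (m : ℕ) (hm : 0 < m) (α : Fin (d + 1) → SB m) (idx : Fin d → Fin (m - 1)),
    (∀ j, degM (α j) = Multiplicative.ofAdd 0) →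
    g (classD d m hm (sbWord α idx)) =
      ∑ k : Fin d, classD (d - 1) m hm (sbWordRepl α idx k (RepGen ε (idx k)))

/-- The `ℂ(q,z)`-vector space freely spanned by the set `S_dB_m` of singular braids on `m`
strands with `d` singular points. -/
abbrev FreeSd (m d : ℕ) : Type :=
  {β : SB m // degM β = Multiplicative.ofAdd d} →₀ Lqz

/-- The basis element of `ℂ(q,z)[S_dB_m]` corresponding to a braid `β ∈ S_dB_m` (defined to
be `0` if `β` does not have exactly `d` singular points). -/
def freeElem {m : ℕ} (d : ℕ) (β : SB m) : FreeSd m d :=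
  if h : degM β = Multiplicative.ofAdd d then Finsupp.single ⟨β, h⟩ 1 else 0

/-- Iterated product (power) with respect to a given bilinear multiplication. -/
def powAux (mul : Markov →ₗ[Lqz] Markov →ₗ[Lqz] Markov) (one x : Markov) : ℕ → Markov
  | 0 => one
  | k + 1 => mul x (powAux mul one x k)

/-!
Replacing the singular points of a singular braid one at a time by `R_i` (`1` for `ε = false`,
`σ_i` for `ε = true`) and summing is a derivation `D` of `H(SB_n)`: it is the `ϵ`-component of
the algebra map `H(SB_n) → H(SB_n)[ϵ]`, `ϵ² = 0`, with `σ_i^{±1} ↦ σ_i^{±1}` and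
`τ_i ↦ τ_i + R_i ϵ`, which respects the singular braid relations and, as `σ_i` has no
`ϵ`-component, the Hecke relation. `D` lowers the number of singular points by one, vanishes on
ordinary braids (in particular on `σ_n`) and commutes with `ι_n`. By the Leibniz rule
`D(ab) - D(ba) = (a·Db - Db·a) - (b·Da - Da·b)`, so `D` maps every defining relation of the
`d`-th Markov module to one of the `(d-1)`-st and descends to the Markov modules. It is the only
such map because the classes `[β, n]` span the Markov module.
-/

theorem SB.mk_surjective {n : ℕ} : Function.Surjective (SB.mk (n := n)) :=
  Con.mk'_surjective

@[simp] theorem heckeOf_mul {n : ℕ} (a b : SB n) :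
    heckeOf (a * b) = heckeOf a * heckeOf b := by
  simp only [heckeOf, map_mul]

@[simp] theorem heckeOf_one {n : ℕ} : heckeOf (1 : SB n) = 1 := by
  simp only [heckeOf, map_one]

theorem heckeOf_sound {n : ℕ} {a b : FreeMonoid (SBGen n)} (h : SBRel n a b) :
    heckeOf (SB.mk a) = heckeOf (SB.mk b) :=
  congrArg heckeOf (SB.sound h)

@[simp] theorem degM_sG {n : ℕ} (i : Fin (n - 1)) : degM (sG i) = 1 := rfl

@[simp] theorem degM_tauG {n : ℕ} (i : Fin (n - 1)) :
    degM (tauG i) = Multiplicative.ofAdd 1 := rfl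

@[simp] theorem degM_RepGen {n : ℕ} (ε : Bool) (i : Fin (n - 1)) : degM (RepGen ε i) = 1 := by
  cases ε <;> simp [RepGen]

theorem degM_inclSB {n : ℕ} (β : SB n) : degM (inclSB (n + 1) (Nat.le_succ n) β) = degM β := by
  have : (degM (n := n + 1)).comp (inclSB (n + 1) (Nat.le_succ n)) = degM :=
    Con.hom_ext <| FreeMonoid.hom_eq fun x => by cases x <;> rfl
  exact DFunLike.congr_fun this β

section sbWord

variable {m : ℕ}

theorem sbWord_zero (α : Fin 1 → SB m) (idx : Fin 0 → Fin (m - 1)) : sbWord α idx = α 0 := by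
  simp [sbWord]

theorem sbWord_succ {d : ℕ} (α : Fin (d + 2) → SB m) (idx : Fin (d + 1) → Fin (m - 1)) :
    sbWord α idx = α 0 * tauG (idx 0) * sbWord (fun j => α j.succ) (fun j => idx j.succ) := by
  simp [sbWord, List.ofFn_succ, mul_assoc]

theorem sbWordRepl_zero {d : ℕ} (α : Fin (d + 2) → SB m) (idx : Fin (d + 1) → Fin (m - 1))
    (x : SB m) :
    sbWordRepl α idx 0 x = α 0 * x * sbWord (fun j => α j.succ) (fun j => idx j.succ) := by
  simp [sbWordRepl, sbWord, List.ofFn_succ, Fin.succ_ne_zero, mul_assoc]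

theorem sbWordRepl_succ {d : ℕ} (α : Fin (d + 2) → SB m) (idx : Fin (d + 1) → Fin (m - 1))
    (k : Fin d) (x : SB m) :
    sbWordRepl α idx k.succ x =
      α 0 * tauG (idx 0) * sbWordRepl (fun j => α j.succ) (fun j => idx j.succ) k x := by
  simp [sbWordRepl, List.ofFn_succ, (Fin.succ_ne_zero k).symm, mul_assoc]

theorem degM_sbWord : ∀ {d : ℕ} (α : Fin (d + 1) → SB m) (idx : Fin d → Fin (m - 1)),
    (∀ j, degM (α j) = Multiplicative.ofAdd 0) → degM (sbWord α idx) = Multiplicative.ofAdd d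
  | 0, α, idx, hα => by rw [sbWord_zero, hα 0]
  | d + 1, α, idx, hα => by
    rw [sbWord_succ, map_mul, map_mul, hα 0, degM_tauG,
      degM_sbWord _ _ fun j => hα j.succ, ← ofAdd_add, ← ofAdd_add, zero_add, add_comm]

theorem degM_sbWordRepl : ∀ {d : ℕ} (α : Fin (d + 1) → SB m) (idx : Fin d → Fin (m - 1))
    (k : Fin d) (x : SB m), (∀ j, degM (α j) = Multiplicative.ofAdd 0) →
    degM x = Multiplicative.ofAdd 0 → degM (sbWordRepl α idx k x) = Multiplicative.ofAdd (d - 1)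
  | 0, _, _, k, _, _, _ => k.elim0
  | d + 1, α, idx, k, x, hα, hx => by
    cases k using Fin.cases with
    | zero =>
      rw [sbWordRepl_zero, map_mul, map_mul, hα 0, hx, degM_sbWord _ _ fun j => hα j.succ,
        ← ofAdd_add, ← ofAdd_add]
      congr 1
      omega
    | succ k =>
      have hd : 1 ≤ d := k.pos
      rw [sbWordRepl_succ, map_mul, map_mul, hα 0, degM_tauG,
        degM_sbWordRepl _ _ k x (fun j => hα j.succ) hx, ← ofAdd_add, ← ofAdd_add]
      congr 1
      omega

theorem exists_sbWord (w : FreeMonoid (SBGen m)) :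
    ∃ (e : ℕ) (α : Fin (e + 1) → SB m) (idx : Fin e → Fin (m - 1)),
      (∀ j, degM (α j) = Multiplicative.ofAdd 0) ∧ SB.mk w = sbWord α idx := by
  induction w using FreeMonoid.recOn with
  | one => exact ⟨0, fun _ => 1, Fin.elim0, fun _ => map_one degM, by rw [sbWord_zero, map_one]⟩
  | of_mul g v ih =>
    obtain ⟨e, α, idx, hα, hv⟩ := ih
    rw [map_mul, hv]
    have prepend (γ : SB m) (hγ : degM γ = 1) :
        ∃ α' : Fin (e + 1) → SB m, (∀ j, degM (α' j) = Multiplicative.ofAdd 0) ∧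
          γ * sbWord α idx = sbWord α' idx := by
      refine ⟨Function.update α 0 (γ * α 0), fun j => ?_, ?_⟩
      · rcases eq_or_ne j 0 with rfl | hj
        · rw [Function.update_self, map_mul, hγ, hα 0, one_mul]
        · rw [Function.update_of_ne hj, hα j]
      · simp [sbWord, mul_assoc]
    cases g with
    | pos i => obtain ⟨α', hα', h⟩ := prepend (sG i) rfl; exact ⟨e, α', idx, hα', h⟩
    | neg i => obtain ⟨α', hα', h⟩ := prepend (sInvG i) rfl; exact ⟨e, α', idx, hα', h⟩
    | tau i =>
      refine ⟨e + 1, Fin.cons 1 α, Fin.cons i idx, Fin.cases (map_one degM) hα, ?_⟩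
      simp [sbWord, List.ofFn_succ, mul_assoc, tauG]

theorem exists_sbWord_of_degM {d : ℕ} {β : SB m} (hβ : degM β = Multiplicative.ofAdd d) :
    ∃ (α : Fin (d + 1) → SB m) (idx : Fin d → Fin (m - 1)),
      (∀ j, degM (α j) = Multiplicative.ofAdd 0) ∧ β = sbWord α idx := by
  obtain ⟨w, rfl⟩ := SB.mk_surjective β
  obtain ⟨e, α, idx, hα, hw⟩ := exists_sbWord w
  obtain rfl : e = d := by
    rw [hw, degM_sbWord α idx hα] at hβ
    exact Multiplicative.ofAdd.injective hβ
  exact ⟨α, idx, hα, hw⟩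

end sbWord

theorem TrivSqZeroExt.snd_map_mul_of_fst {R A : Type*} [CommSemiring R] [Semiring A]
    [Algebra R A] (ψ : A →ₐ[R] TrivSqZeroExt A A) (hψ : ∀ x, (ψ x).fst = x) (x y : A) :
    (ψ (x * y)).snd = x * (ψ y).snd + (ψ x).snd * y := by
  rw [map_mul, TrivSqZeroExt.snd_mul, hψ, hψ, smul_eq_mul, MulOpposite.smul_eq_mul_unop,
    MulOpposite.unop_op]

theorem Hecke.induction_on {n : ℕ} {P : Hecke n → Prop} (x : Hecke n)
    (of : ∀ β : SB n, P (heckeOf β)) (add : ∀ x y, P x → P y → P (x + y))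
    (smul : ∀ (k : Kq) (x), P x → P (k • x)) : P x := by
  obtain ⟨y, rfl⟩ := RingQuot.mkAlgHom_surjective Kq (HeckeRel n) x
  induction y using MonoidAlgebra.induction_linear with
  | zero => simpa using smul 0 _ (of 1)
  | add f g hf hg => rw [map_add]; exact add _ _ hf hg
  | single β k =>
    rw [← mul_one k, ← smul_eq_mul, ← MonoidAlgebra.smul_single, map_smul]
    exact smul k _ (of β)

section Derivation

variable {m : ℕ} (ε : Bool)

def derivGen : SBGen m → TrivSqZeroExt (Hecke m) (Hecke m)
  | .pos i => .inl (heckeOf (sG i))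
  | .neg i => .inl (heckeOf (sInvG i))
  | .tau i => .inl (heckeOf (tauG i)) + .inr (heckeOf (RepGen ε i))

theorem fst_lift_derivGen (w : FreeMonoid (SBGen m)) :
    (FreeMonoid.lift (derivGen ε) w).fst = heckeOf (SB.mk w) := by
  induction w using FreeMonoid.inductionOn with
  | one => simp
  | of g => cases g <;> simp [derivGen, sG, sInvG, tauG]
  | mul x y hx hy => rw [map_mul, TrivSqZeroExt.fst_mul, hx, hy, map_mul, heckeOf_mul]

theorem lift_derivGen_eq_of_rel {a b : FreeMonoid (SBGen m)} (h : SBRel m a b) :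
    FreeMonoid.lift (derivGen ε) a = FreeMonoid.lift (derivGen ε) b := by
  refine TrivSqZeroExt.ext (by simp only [fst_lift_derivGen, heckeOf_sound h]) ?_
  cases h <;> cases ε <;>
    simp [derivGen, RepGen, smul_eq_mul, MulOpposite.smul_eq_mul_unop, mul_add, add_mul]
  case braid_tau.true i j hij => simpa [sG, map_mul] using heckeOf_sound (.braid i j hij)
  case comm_st.true i j hij => simpa [sG, map_mul] using heckeOf_sound (.comm_ss i j hij)
  case comm_tt.false => exact add_comm _ _
  case comm_tt.true i j hij =>
    have hij' := heckeOf_sound (.comm_st i j hij)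
    have hji' := heckeOf_sound (.comm_st j i hij.symm)
    simp only [map_mul, heckeOf_mul] at hij' hji'
    simp only [sG, tauG, hij', hji', add_comm]

def derivHom : SB m →* TrivSqZeroExt (Hecke m) (Hecke m) :=
  SB.lift (derivGen ε) fun _ _ => lift_derivGen_eq_of_rel ε

theorem fst_derivHom (β : SB m) : (derivHom ε β).fst = heckeOf β := by
  obtain ⟨w, rfl⟩ := SB.mk_surjective β
  exact fst_lift_derivGen ε w

theorem derivHom_sG (i : Fin (m - 1)) : derivHom ε (sG i) = .inl (heckeOf (sG i)) :=
  SB.lift_mk _ _ _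

def heckeDerivHom : Hecke m →ₐ[Kq] TrivSqZeroExt (Hecke m) (Hecke m) :=
  RingQuot.liftAlgHom Kq ⟨MonoidAlgebra.lift Kq _ (SB m) (derivHom ε), by
    rintro _ _ ⟨i, rfl, rfl⟩
    have hsq : heckeOf (sG i) ^ 2 = (qK - 1) • heckeOf (sG i) + qK • 1 := by
      simpa only [heckeOf, map_pow, map_add, map_smul, map_one] using
        RingQuot.mkAlgHom_rel Kq (s := HeckeRel m) ⟨i, rfl, rfl⟩
    simp only [map_pow, map_add, map_smul, map_one, MonoidAlgebra.lift_of, derivHom_sG]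
    rw [TrivSqZeroExt.inl_pow, hsq, TrivSqZeroExt.inl_add, TrivSqZeroExt.inl_smul,
      TrivSqZeroExt.inl_smul, TrivSqZeroExt.inl_one]⟩

theorem heckeDerivHom_heckeOf (β : SB m) : heckeDerivHom ε (heckeOf β) = derivHom ε β := by
  rw [heckeOf, heckeDerivHom, RingQuot.liftAlgHom_mkAlgHom_apply, MonoidAlgebra.lift_of]

theorem fst_heckeDerivHom (x : Hecke m) : (heckeDerivHom ε x).fst = x := by
  induction x using Hecke.induction_on with
  | of β => rw [heckeDerivHom_heckeOf, fst_derivHom]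
  | add x y hx hy => rw [map_add, TrivSqZeroExt.fst_add, hx, hy]
  | smul k x hx => rw [map_smul, TrivSqZeroExt.fst_smul, hx]

def heckeDeriv : Hecke m →ₗ[Kq] Hecke m :=
  (TrivSqZeroExt.sndHom (Hecke m) (Hecke m)).restrictScalars Kq ∘ₗ
    (heckeDerivHom ε).toLinearMap

theorem heckeDeriv_apply (x : Hecke m) : heckeDeriv ε x = (heckeDerivHom ε x).snd := rfl

theorem heckeDeriv_mul (x y : Hecke m) :
    heckeDeriv ε (x * y) = x * heckeDeriv ε y + heckeDeriv ε x * y :=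
  TrivSqZeroExt.snd_map_mul_of_fst _ (fst_heckeDerivHom ε) x y

theorem heckeDeriv_heckeOf_gen (g : SBGen m) :
    heckeDeriv ε (heckeOf (SB.mk (.of g))) = (derivGen ε g).snd := by
  rw [heckeDeriv_apply, heckeDerivHom_heckeOf, derivHom, SB.lift_mk, FreeMonoid.lift_eval_of]

@[simp] theorem heckeDeriv_sG (i : Fin (m - 1)) : heckeDeriv ε (heckeOf (sG i)) = 0 :=
  heckeDeriv_heckeOf_gen ε (.pos i)

@[simp] theorem heckeDeriv_sInvG (i : Fin (m - 1)) : heckeDeriv ε (heckeOf (sInvG i)) = 0 :=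
  heckeDeriv_heckeOf_gen ε (.neg i)

@[simp] theorem heckeDeriv_tauG (i : Fin (m - 1)) :
    heckeDeriv ε (heckeOf (tauG i)) = heckeOf (RepGen ε i) := by
  rw [tauG, heckeDeriv_heckeOf_gen]
  simp [derivGen]

theorem heckeDeriv_heckeOf_of_degM_eq_one {β : SB m} (hβ : degM β = 1) :
    heckeDeriv ε (heckeOf β) = 0 := by
  obtain ⟨w, rfl⟩ := SB.mk_surjective β
  induction w using FreeMonoid.inductionOn with
  | one => simp [heckeDeriv_apply]
  | of g =>
    cases g with
    | pos i => exact heckeDeriv_sG ε i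
    | neg i => exact heckeDeriv_sInvG ε i
    | tau i =>
      change degM (tauG i) = 1 at hβ
      simp at hβ
  | mul x y hx hy =>
    rw [map_mul, map_mul, mul_eq_one] at hβ
    rw [map_mul, heckeOf_mul, heckeDeriv_mul, hx hβ.1, hy hβ.2, mul_zero, zero_mul, add_zero]

theorem heckeDeriv_sbWord : ∀ {d : ℕ} (α : Fin (d + 1) → SB m) (idx : Fin d → Fin (m - 1)),
    (∀ j, degM (α j) = Multiplicative.ofAdd 0) →
    heckeDeriv ε (heckeOf (sbWord α idx)) =
      ∑ k : Fin d, heckeOf (sbWordRepl α idx k (RepGen ε (idx k)))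
  | 0, α, idx, hα => by
    rw [sbWord_zero, heckeDeriv_heckeOf_of_degM_eq_one ε (hα 0), Finset.univ_eq_empty,
      Finset.sum_empty]
  | d + 1, α, idx, hα => by
    rw [sbWord_succ, heckeOf_mul, heckeOf_mul, heckeDeriv_mul, heckeDeriv_mul,
      heckeDeriv_heckeOf_of_degM_eq_one ε (hα 0), heckeDeriv_tauG,
      heckeDeriv_sbWord _ _ fun j => hα j.succ, Fin.sum_univ_succ, Finset.mul_sum]
    simp only [sbWordRepl_zero, sbWordRepl_succ, heckeOf_mul, zero_mul, zero_add, add_comm]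

theorem heckeIncl_heckeOf {n : ℕ} (β : SB n) :
    heckeIncl n (heckeOf β) = heckeOf (inclSB (n + 1) (Nat.le_succ n) β) := by
  rw [heckeOf, heckeIncl, RingQuot.liftAlgHom_mkAlgHom_apply, AlgHom.coe_comp,
    Function.comp_apply, MonoidAlgebra.of_apply, MonoidAlgebra.mapDomainAlgHom_apply,
    MonoidAlgebra.mapDomain_single]
  rfl

theorem inclSB_mk_of {n : ℕ} (g : SBGen n) :
    inclSB (n + 1) (Nat.le_succ n) (SB.mk (.of g)) =
      SB.mk (.of (shiftGen (n + 1) 0 (by omega) g)) :=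
  rfl

theorem heckeDeriv_heckeIncl {n : ℕ} (x : Hecke n) :
    heckeDeriv ε (heckeIncl n x) = heckeIncl n (heckeDeriv ε x) := by
  induction x using Hecke.induction_on with
  | add x y hx hy => simp only [map_add, hx, hy]
  | smul k x hx => simp only [map_smul, hx]
  | of β =>
    obtain ⟨w, rfl⟩ := SB.mk_surjective β
    induction w using FreeMonoid.inductionOn with
    | one => simp [heckeDeriv_apply]
    | mul x y hx hy => simp only [map_mul, heckeOf_mul, heckeDeriv_mul, map_add, hx, hy]
    | of g =>
      rw [heckeIncl_heckeOf, inclSB_mk_of, heckeDeriv_heckeOf_gen, heckeDeriv_heckeOf_gen]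
      cases g <;> cases ε <;> simp [derivGen, shiftGen, RepGen, heckeIncl_heckeOf, inclSB_sG]

end Derivation

section BaseChange

variable {m : ℕ} (ε : Bool)

def heckeDerivZ : HeckeZ m →ₗ[Lqz] HeckeZ m :=
  (heckeDeriv ε).baseChange Lqz

theorem heckeDerivZ_tmul (l : Lqz) (x : Hecke m) :
    heckeDerivZ ε (l ⊗ₜ[Kq] x) = l ⊗ₜ[Kq] heckeDeriv ε x := rfl

theorem ofHZ_mul (a b : SB m) : ofHZ (a * b) = ofHZ a * ofHZ b := by
  rw [ofHZ, ofHZ, ofHZ, heckeOf_mul, Algebra.TensorProduct.tmul_mul_tmul, one_mul]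

theorem heckeDerivZ_mul (x y : HeckeZ m) :
    heckeDerivZ ε (x * y) = x * heckeDerivZ ε y + heckeDerivZ ε x * y := by
  induction x using TensorProduct.induction_on with
  | zero => simp
  | add x₁ x₂ h₁ h₂ => simp only [add_mul, map_add, h₁, h₂]; abel
  | tmul l a =>
    induction y using TensorProduct.induction_on with
    | zero => simp
    | add y₁ y₂ h₁ h₂ => simp only [mul_add, map_add, h₁, h₂]; abel
    | tmul l' b =>
      simp only [Algebra.TensorProduct.tmul_mul_tmul, heckeDerivZ_tmul, heckeDeriv_mul,
        TensorProduct.tmul_add]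

theorem heckeDerivZ_ofHZ_of_degM_eq_one {β : SB m} (hβ : degM β = 1) :
    heckeDerivZ ε (ofHZ β) = 0 := by
  rw [ofHZ, heckeDerivZ_tmul, heckeDeriv_heckeOf_of_degM_eq_one ε hβ, TensorProduct.tmul_zero]

theorem heckeDerivZ_ofHZ_sbWord {d : ℕ} (α : Fin (d + 1) → SB m) (idx : Fin d → Fin (m - 1))
    (hα : ∀ j, degM (α j) = Multiplicative.ofAdd 0) :
    heckeDerivZ ε (ofHZ (sbWord α idx)) =
      ∑ k : Fin d, ofHZ (sbWordRepl α idx k (RepGen ε (idx k))) := by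
  rw [ofHZ, heckeDerivZ_tmul, heckeDeriv_sbWord ε α idx hα, TensorProduct.tmul_sum]
  rfl

theorem heckeDerivZ_sigmaLast (i : Idx) : heckeDerivZ ε (ofHZ (sigmaLast i)) = 0 :=
  heckeDerivZ_ofHZ_of_degM_eq_one ε (degM_sG _)

theorem heckeDerivZ_iotaHZ {n : ℕ} (x : HeckeZ n) :
    heckeDerivZ ε (iotaHZ n x) = iotaHZ n (heckeDerivZ ε x) := by
  induction x using TensorProduct.induction_on with
  | zero => simp only [map_zero]
  | add x y hx hy => simp only [map_add, hx, hy]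
  | tmul l a =>
    rw [iotaHZ, Algebra.TensorProduct.map_tmul, heckeDerivZ_tmul, heckeDerivZ_tmul,
      heckeDeriv_heckeIncl, Algebra.TensorProduct.map_tmul]

end BaseChange

section Grading

variable {m : ℕ}

theorem ofHZ_mem_HzSd {β : SB m} {e : ℕ} (h : degM β = Multiplicative.ofAdd e) :
    ofHZ β ∈ HzSd m e :=
  Submodule.subset_span ⟨β, h, rfl⟩

theorem HzSd_mul_le (k l : ℕ) : HzSd m k * HzSd m l ≤ HzSd m (k + l) := by
  rw [HzSd, HzSd, Submodule.span_mul_span]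
  refine Submodule.span_le.2 ?_
  rintro _ ⟨_, ⟨β, hβ, rfl⟩, _, ⟨γ, hγ, rfl⟩, rfl⟩
  show ofHZ β * ofHZ γ ∈ HzSd m (k + l)
  rw [← ofHZ_mul]
  exact ofHZ_mem_HzSd (by rw [map_mul, hβ, hγ, ofAdd_add])

theorem HzSd_mul_mem {x y : HeckeZ m} {k l : ℕ} (hx : x ∈ HzSd m k) (hy : y ∈ HzSd m l) :
    x * y ∈ HzSd m (k + l) :=
  HzSd_mul_le k l (Submodule.mul_mem_mul hx hy)

theorem iotaHZ_ofHZ {n : ℕ} (β : SB n) :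
    iotaHZ n (ofHZ β) = ofHZ (inclSB (n + 1) (Nat.le_succ n) β) := by
  rw [ofHZ, iotaHZ, Algebra.TensorProduct.map_tmul, heckeIncl_heckeOf, map_one]
  rfl

theorem iotaHZ_mem_HzSd {n e : ℕ} {x : HeckeZ n} (hx : x ∈ HzSd n e) :
    iotaHZ n x ∈ HzSd (n + 1) e := by
  refine (Submodule.span_le (p := (HzSd (n + 1) e).comap (iotaHZ n).toLinearMap)).2 ?_ hx
  rintro _ ⟨β, hβ, rfl⟩
  show iotaHZ n (ofHZ β) ∈ HzSd (n + 1) e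
  exact iotaHZ_ofHZ β ▸ ofHZ_mem_HzSd ((degM_inclSB β).trans hβ)

variable (ε : Bool)

theorem heckeDerivZ_mem_HzSd {x : HeckeZ m} {e : ℕ} (hx : x ∈ HzSd m e) :
    heckeDerivZ ε x ∈ HzSd m (e - 1) := by
  refine (Submodule.span_le (p := (HzSd m (e - 1)).comap (heckeDerivZ ε))).2 ?_ hx
  rintro _ ⟨β, hβ, rfl⟩
  obtain ⟨α, idx, hα, rfl⟩ := exists_sbWord_of_degM hβ
  rw [SetLike.mem_coe, Submodule.mem_comap, heckeDerivZ_ofHZ_sbWord ε α idx hα]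
  exact Submodule.sum_mem _ fun k _ =>
    ofHZ_mem_HzSd (degM_sbWordRepl α idx k _ hα (degM_RepGen ε _))

theorem heckeDerivZ_eq_zero_of_mem_HzSd_zero {x : HeckeZ m} (hx : x ∈ HzSd m 0) :
    heckeDerivZ ε x = 0 := by
  refine (Submodule.span_le (p := LinearMap.ker (heckeDerivZ ε))).2 ?_ hx
  rintro _ ⟨β, hβ, rfl⟩
  exact heckeDerivZ_ofHZ_of_degM_eq_one ε hβ

theorem mul_heckeDerivZ_mem_HzSd {x y : HeckeZ m} {k l e : ℕ} (h : k + l = e)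
    (hx : x ∈ HzSd m k) (hy : y ∈ HzSd m l) : x * heckeDerivZ ε y ∈ HzSd m (e - 1) := by
  rcases l with _ | l
  · rw [heckeDerivZ_eq_zero_of_mem_HzSd_zero ε hy, mul_zero]
    exact zero_mem _
  · have hy' : heckeDerivZ ε y ∈ HzSd m l := by simpa using heckeDerivZ_mem_HzSd ε hy
    rw [← h, show k + (l + 1) - 1 = k + l by omega]
    exact HzSd_mul_mem hx hy'

theorem heckeDerivZ_mul_mem_HzSd {x y : HeckeZ m} {k l e : ℕ} (h : k + l = e)
    (hx : x ∈ HzSd m k) (hy : y ∈ HzSd m l) : heckeDerivZ ε y * x ∈ HzSd m (e - 1) := by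
  rcases l with _ | l
  · rw [heckeDerivZ_eq_zero_of_mem_HzSd_zero ε hy, zero_mul]
    exact zero_mem _
  · have hy' : heckeDerivZ ε y ∈ HzSd m l := by simpa using heckeDerivZ_mem_HzSd ε hy
    rw [← h, show k + (l + 1) - 1 = l + k by omega]
    exact HzSd_mul_mem hy' hx

theorem iotaHZ_mul_sigmaLast_mem_HzSd {i : Idx} {e : ℕ} {x : HeckeZ i.1}
    (hx : x ∈ HzSd i.1 e) : iotaHZ i.1 x * ofHZ (sigmaLast i) ∈ HzSd (i.1 + 1) e := by
  have hσ : ofHZ (sigmaLast i) ∈ HzSd (i.1 + 1) 0 := ofHZ_mem_HzSd (degM_sG _)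
  simpa using HzSd_mul_mem (iotaHZ_mem_HzSd hx) hσ

end Grading

section Markov

variable (ε : Bool)

def derivSum (d : ℕ) : MVD d →ₗ[Lqz] MVD (d - 1) :=
  DirectSum.lmap fun _ => (heckeDerivZ ε).restrict fun _ hx => heckeDerivZ_mem_HzSd ε hx

theorem derivSum_mvdof {d : ℕ} (i : Idx) {x : HeckeZ i.1} (hx : x ∈ HzSd i.1 d) :
    derivSum ε d (mvdof d i ⟨x, hx⟩) =
      mvdof (d - 1) i ⟨heckeDerivZ ε x, heckeDerivZ_mem_HzSd ε hx⟩ :=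
  DirectSum.lmap_lof _ i _

theorem mvdof_mul_heckeDerivZ_sub_mem {k l e : ℕ} (i : Idx) (h : k + l = e) {x y : HeckeZ i.1}
    (hx : x ∈ HzSd i.1 k) (hy : y ∈ HzSd i.1 l) :
    mvdof (e - 1) i ⟨x * heckeDerivZ ε y, mul_heckeDerivZ_mem_HzSd ε h hx hy⟩ -
        mvdof (e - 1) i ⟨heckeDerivZ ε y * x, heckeDerivZ_mul_mem_HzSd ε h hx hy⟩ ∈
      Submodule.span Lqz (markovRelsD (e - 1)) := by
  rcases l with _ | l
  · have hy0 := heckeDerivZ_eq_zero_of_mem_HzSd_zero ε hy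
    rw [sub_eq_zero.2 (congrArg (mvdof (e - 1) i) (Subtype.ext
      (show x * heckeDerivZ ε y = heckeDerivZ ε y * x by rw [hy0, mul_zero, zero_mul])))]
    exact zero_mem _
  · have hy' : heckeDerivZ ε y ∈ HzSd i.1 l := by simpa using heckeDerivZ_mem_HzSd ε hy
    exact Submodule.subset_span (.inl (.inl ⟨i, k, l, by omega, x, _, hx, hy', _, _, rfl⟩))

theorem derivSum_traceRel_mem {k l e : ℕ} (i : Idx) (h : k + l = e) {a b : HeckeZ i.1}
    (ha : a ∈ HzSd i.1 k) (hb : b ∈ HzSd i.1 l) (hab : a * b ∈ HzSd i.1 e)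
    (hba : b * a ∈ HzSd i.1 e) :
    derivSum ε e (mvdof e i ⟨a * b, hab⟩ - mvdof e i ⟨b * a, hba⟩) ∈
      Submodule.span Lqz (markovRelsD (e - 1)) := by
  have h' : l + k = e := by omega
  have hab' : (⟨heckeDerivZ ε (a * b), heckeDerivZ_mem_HzSd ε hab⟩ : HzSd i.1 (e - 1)) =
      ⟨a * heckeDerivZ ε b, mul_heckeDerivZ_mem_HzSd ε h ha hb⟩ +
        ⟨heckeDerivZ ε a * b, heckeDerivZ_mul_mem_HzSd ε h' hb ha⟩ :=
    Subtype.ext (heckeDerivZ_mul ε a b)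
  have hba' : (⟨heckeDerivZ ε (b * a), heckeDerivZ_mem_HzSd ε hba⟩ : HzSd i.1 (e - 1)) =
      ⟨b * heckeDerivZ ε a, mul_heckeDerivZ_mem_HzSd ε h' hb ha⟩ +
        ⟨heckeDerivZ ε b * a, heckeDerivZ_mul_mem_HzSd ε h ha hb⟩ :=
    Subtype.ext (heckeDerivZ_mul ε b a)
  rw [map_sub, derivSum_mvdof, derivSum_mvdof, hab', hba', map_add, map_add]
  convert sub_mem (mvdof_mul_heckeDerivZ_sub_mem ε i h ha hb)
    (mvdof_mul_heckeDerivZ_sub_mem ε i h' hb ha) using 1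
  abel

theorem derivSum_stabRel_mem {e : ℕ} (i : Idx) {a : HeckeZ i.1} (ha : a ∈ HzSd i.1 e)
    (ha' : iotaHZ i.1 a ∈ HzSd (i.1 + 1) e) :
    derivSum ε e (mvdof e i ⟨a, ha⟩ - mvdof e (succI i) ⟨iotaHZ i.1 a, ha'⟩) ∈
      Submodule.span Lqz (markovRelsD (e - 1)) := by
  have hDa := heckeDerivZ_mem_HzSd ε ha
  have hι : (⟨heckeDerivZ (m := (succI i).1) ε (iotaHZ i.1 a), heckeDerivZ_mem_HzSd ε ha'⟩ :
      HzSd (succI i).1 (e - 1)) = ⟨iotaHZ i.1 (heckeDerivZ ε a), iotaHZ_mem_HzSd hDa⟩ :=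
    Subtype.ext (heckeDerivZ_iotaHZ ε a)
  rw [map_sub, derivSum_mvdof ε i ha, derivSum_mvdof ε (succI i) (x := iotaHZ i.1 a) ha', hι]
  exact Submodule.subset_span (.inl (.inr ⟨i, _, hDa, _, rfl⟩))

theorem derivSum_markovRel_mem {e : ℕ} (i : Idx) {a : HeckeZ i.1} (ha : a ∈ HzSd i.1 e)
    (ha' : iotaHZ i.1 a * ofHZ (sigmaLast i) ∈ HzSd (i.1 + 1) e) :
    derivSum ε e (mvdof e (succI i) ⟨iotaHZ i.1 a * ofHZ (sigmaLast i), ha'⟩ -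
        zL • mvdof e i ⟨a, ha⟩) ∈ Submodule.span Lqz (markovRelsD (e - 1)) := by
  have hDa := heckeDerivZ_mem_HzSd ε ha
  have hσ : (⟨heckeDerivZ (m := (succI i).1) ε (iotaHZ i.1 a * ofHZ (sigmaLast i)),
      heckeDerivZ_mem_HzSd ε ha'⟩ : HzSd (succI i).1 (e - 1)) =
      ⟨iotaHZ i.1 (heckeDerivZ ε a) * ofHZ (sigmaLast i),
        iotaHZ_mul_sigmaLast_mem_HzSd hDa⟩ := by
    ext
    show heckeDerivZ ε (iotaHZ i.1 a * ofHZ (sigmaLast i)) = _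
    rw [heckeDerivZ_mul, heckeDerivZ_sigmaLast, heckeDerivZ_iotaHZ, mul_zero, zero_add]
  rw [map_sub, map_smul, derivSum_mvdof ε i ha,
    derivSum_mvdof ε (succI i) (x := iotaHZ i.1 a * ofHZ (sigmaLast i)) ha', hσ]
  exact Submodule.subset_span (.inr ⟨i, _, hDa, _, rfl⟩)

theorem span_markovRelsD_le_comap_derivSum (d : ℕ) :
    Submodule.span Lqz (markovRelsD d) ≤
      (Submodule.span Lqz (markovRelsD (d - 1))).comap (derivSum ε d) := by
  rw [Submodule.span_le]
  rintro _ ((⟨i, k, l, h, a, b, ha, hb, hab, hba, rfl⟩ | ⟨i, a, ha, ha', rfl⟩) |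
    ⟨i, a, ha, ha', rfl⟩)
  exacts [derivSum_traceRel_mem ε i h ha hb hab hba, derivSum_stabRel_mem ε i ha ha',
    derivSum_markovRel_mem ε i ha ha']

def markovDeriv (d : ℕ) : MarkovD d →ₗ[Lqz] MarkovD (d - 1) :=
  Submodule.mapQ _ _ (derivSum ε d) (span_markovRelsD_le_comap_derivSum ε d)

theorem classD_eq_mk {d m : ℕ} (hm : 0 < m) {β : SB m}
    (hβ : degM β = Multiplicative.ofAdd d) :
    classD d m hm β =
      Submodule.Quotient.mk (mvdof d ⟨m, hm⟩ ⟨ofHZ β, ofHZ_mem_HzSd hβ⟩) :=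
  dif_pos hβ

theorem isG_markovDeriv (d : ℕ) : IsG d ε (markovDeriv ε d) := by
  intro m hm α idx hα
  have hrepl k := degM_sbWordRepl α idx k _ hα (degM_RepGen ε (idx k))
  rw [classD_eq_mk hm (degM_sbWord α idx hα), markovDeriv, Submodule.mapQ_apply,
    derivSum_mvdof]
  simp only [classD_eq_mk hm (hrepl _), ← Submodule.mkQ_apply, ← map_sum]
  congr 2
  ext
  simp [heckeDerivZ_ofHZ_sbWord ε α idx hα]

end Markov

theorem span_classD_eq_top (d : ℕ) :
    Submodule.span Lqz
      {x | ∃ m hm β, degM β = Multiplicative.ofAdd d ∧ classD d m hm β = x} = ⊤ := by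
  refine Submodule.eq_top_iff'.2 fun v => ?_
  obtain ⟨x, rfl⟩ := Submodule.mkQ_surjective _ v
  induction x using DirectSum.induction_on with
  | zero => rw [map_zero]; exact zero_mem _
  | add x y hx hy => rw [map_add]; exact add_mem hx hy
  | of i y =>
    have hy : y ∈ Submodule.span Lqz (Subtype.val ⁻¹'
        {x | ∃ β : SB i.1, degM β = Multiplicative.ofAdd d ∧ x = ofHZ β}) :=
      Submodule.eq_top_iff'.1 Submodule.span_span_coe_preimage y
    have hmap :=
      Submodule.mem_map_of_mem (f := (Submodule.span Lqz (markovRelsD d)).mkQ ∘ₗ mvdof d i) hy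
    rw [Submodule.map_span] at hmap
    refine Submodule.span_mono ?_ hmap
    rintro _ ⟨⟨_, _⟩, ⟨β, hβ, rfl⟩, rfl⟩
    exact ⟨i.1, i.2, β, hβ, classD_eq_mk i.2 hβ⟩

theorem exists_unique_g_general (d : ℕ) (ε : Bool) :
    ∃! g : MarkovD d →ₗ[Lqz] MarkovD (d - 1), IsG d ε g := by
  refine ⟨markovDeriv ε d, isG_markovDeriv ε d, fun g hg => ?_⟩
  refine LinearMap.ext_on (span_classD_eq_top d) ?_
  rintro _ ⟨m, hm, β, hβ, rfl⟩
  obtain ⟨α, idx, hα, rfl⟩ := exists_sbWord_of_degM hβ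
  rw [hg m hm α idx hα, isG_markovDeriv ε d m hm α idx hα]

/-- For every `d ≥ 1` and each `ε ∈ {0,1}`, there is a unique `ℂ(q,z)`-linear map
`g_ε : Markov(⊔S_dB) → Markov(⊔S_{d-1}B)` such that `g_ε([β,n]) = [f_{n,ε}(β), n]` for every
`n` and every `β ∈ S_dB_n`: the families `{f_{n,0}}_n` and `{f_{n,1}}_n` are compatible with
the defining relations of the Markov modules. -/
theorem exists_unique_g (d : ℕ) (hd : 1 ≤ d) (ε : Bool) :
    ∃! g : MarkovD d →ₗ[Lqz] MarkovD (d - 1), IsG d ε g :=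
  exists_unique_g_general d ε

end
end SingularHOMFLYPT
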